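/- arXiv:2010.15651 — 4 statements merged into one kernel-verified Lean document; each statement's English description precedes it below -/
import Mathlib

section
/- For the ratio of softmax weights of a perturbed point to a clean point: if the clean points are all at the origin and the m perturbed points are all at p·e_1 with p > 0, then ŝ_pert / ŝ_clean = exp(−((n−m) − m)·p / T), and hence if m < n − m this ratio tends to 0 as p → ∞. -/
/-! Each perturbed point is at distance `p` from the `n - m` clean points and each clean point at
distance `p` from the `m` perturbed points, so the logits are `-(n - m) p / T` and `-m p / T`.
A ratio of softmax weights depends only on the difference of the logits. -/

open scoped BigOperators
open Filter Topology Finset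

noncomputable def softmax {ι : Type*} [Fintype ι] (f : ι → ℝ) (i : ι) : ℝ :=
  Real.exp (f i) / ∑ q, Real.exp (f q)

theorem softmax_div_softmax {ι : Type*} [Fintype ι] (f : ι → ℝ) (i h : ι) :
    softmax f i / softmax f h = Real.exp (f i - f h) := by
  have hZ : 0 < ∑ q, Real.exp (f q) := sum_pos (fun q _ => Real.exp_pos _) ⟨i, mem_univ i⟩
  rw [softmax, softmax, div_div_div_cancel_right₀ hZ.ne', Real.exp_sub]

theorem sum_norm_ite_sub {ι E : Type*} [Fintype ι] [SeminormedAddCommGroup E]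
    (P : ι → Prop) [DecidablePred P] (a b : E) :
    ∑ j, ‖(if P j then a else b) - a‖ = #{j | ¬ P j} * ‖b - a‖ := calc
  _ = ∑ j, if P j then 0 else ‖b - a‖ := sum_congr rfl fun j _ => by split_ifs <;> simp
  _ = _ := by rw [sum_ite, sum_const_zero, zero_add, sum_const, nsmul_eq_mul]

theorem sum_norm_ite_sub' {ι E : Type*} [Fintype ι] [SeminormedAddCommGroup E]
    (P : ι → Prop) [DecidablePred P] (a b : E) :
    ∑ j, ‖(if P j then a else b) - b‖ = #{j | P j} * ‖a - b‖ := by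
  simpa only [ite_not, not_not] using sum_norm_ite_sub (fun j => ¬ P j) b a

theorem Fin.card_filter_not_val_lt {n m : ℕ} : #{j : Fin n | ¬ (j : ℕ) < m} = n - m := by
  have := card_filter_add_card_filter_not (s := univ) fun j : Fin n => (j : ℕ) < m
  rw [Fin.card_filter_val_lt, card_univ, Fintype.card_fin] at this
  omega

theorem tendsto_exp_neg_mul_div_atTop {c T : ℝ} (hc : 0 < c) (hT : 0 < T) :
    Tendsto (fun p => Real.exp (-c * p / T)) atTop (𝓝 0) := by
  refine Real.tendsto_exp_atBot.comp ?_
  simp_rw [mul_div_right_comm]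
  exact tendsto_id.const_mul_atTop_of_neg (div_neg_of_neg_of_pos (neg_neg_of_pos hc) hT)

theorem soft_medoid_weight_ratio_point_mass_general (n m d : ℕ) (hd : 0 < d)
    (T : ℝ) (hT : 0 < T)
    (xt : ℝ → Fin n → EuclideanSpace ℝ (Fin d))
    (hxt : ∀ (p : ℝ) (i : Fin n), xt p i =
      if (i : ℕ) < m then p • EuclideanSpace.single (⟨0, hd⟩ : Fin d) (1 : ℝ) else 0)
    (s : ℝ → Fin n → ℝ)
    (hs : ∀ (p : ℝ) (i : Fin n), s p i =
      Real.exp (-(1 / T) * ∑ j, ‖xt p j - xt p i‖) /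
        ∑ q, Real.exp (-(1 / T) * ∑ j, ‖xt p j - xt p q‖))
    (i h : Fin n) (hi : (i : ℕ) < m) (hh : m ≤ (h : ℕ)) :
    (∀ p : ℝ, 0 < p →
      s p i / s p h = Real.exp (-(((n : ℝ) - m) - m) * p / T)) ∧
    (m < n - m → Tendsto (fun p : ℝ => s p i / s p h) atTop (𝓝 0)) := by
  have hmn : m ≤ n := hh.trans h.isLt.le
  have hratio (p : ℝ) (hp : 0 < p) : s p i / s p h = Real.exp (-(((n : ℝ) - m) - m) * p / T) := by
    have hnorm : ‖p • EuclideanSpace.single (⟨0, hd⟩ : Fin d) (1 : ℝ)‖ = p := by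
      rw [norm_smul, PiLp.norm_single, norm_one, mul_one, Real.norm_of_nonneg hp.le]
    have hcost_i : ∑ j, ‖xt p j - xt p i‖ = ((n : ℝ) - m) * p := by
      simp only [hxt p, if_pos hi]
      rw [sum_norm_ite_sub, zero_sub, norm_neg, hnorm, Fin.card_filter_not_val_lt,
        Nat.cast_sub hmn]
    have hcost_h : ∑ j, ‖xt p j - xt p h‖ = m * p := by
      simp only [hxt p, if_neg hh.not_gt]
      rw [sum_norm_ite_sub', sub_zero, hnorm, Fin.card_filter_val_lt, min_eq_right hmn]
    rw [show s p = softmax (fun q => -(1 / T) * ∑ j, ‖xt p j - xt p q‖) from funext (hs p),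
      softmax_div_softmax, hcost_i, hcost_h]
    congr 1
    ring
  refine ⟨hratio, fun hlt => ?_⟩
  have hc : (0 : ℝ) < (n - m) - m := by
    have : ((m : ℕ) : ℝ) < ((n - m : ℕ) : ℝ) := by exact_mod_cast hlt
    push_cast [hmn] at this
    linarith
  exact (tendsto_exp_neg_mul_div_atTop hc hT).congr'
    ((eventually_gt_atTop 0).mono fun p hp => (hratio p hp).symm)

/-- Point-mass perturbation: with `n - m` clean points at the origin and `m` perturbed
points at `p • e₁`, the ratio of the softmax weight of a perturbed point to that of a clean
point equals `exp(-((n-m) - m) p / T)`, and hence tends to `0` as `p → ∞` when `m < n - m`. -/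
theorem soft_medoid_weight_ratio_point_mass (n m d : ℕ) (hd : 0 < d) (hm : 0 < m)
    (hmn : m < n) (T : ℝ) (hT : 0 < T)
    (xt : ℝ → Fin n → EuclideanSpace ℝ (Fin d))
    (hxt : ∀ (p : ℝ) (i : Fin n), xt p i =
      if (i : ℕ) < m then p • EuclideanSpace.single (⟨0, hd⟩ : Fin d) (1 : ℝ) else 0)
    (s : ℝ → Fin n → ℝ)
    (hs : ∀ (p : ℝ) (i : Fin n), s p i =
      Real.exp (-(1 / T) * ∑ j, ‖xt p j - xt p i‖) /
        ∑ q, Real.exp (-(1 / T) * ∑ j, ‖xt p j - xt p q‖))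
    (i h : Fin n) (hi : (i : ℕ) < m) (hh : m ≤ (h : ℕ)) :
    (∀ p : ℝ, 0 < p →
      s p i / s p h = Real.exp (-(((n : ℝ) - m) - m) * p / T)) ∧
    (m < n - m → Tendsto (fun p : ℝ => s p i / s p h) atTop (𝓝 0)) :=
  soft_medoid_weight_ratio_point_mass_general n m d hd T hT xt hxt s hs i h hi hh
end

section
/- In the point-mass perturbation setting where m < n − m clean points sit at the origin and m perturbed points sit at p·e_1, the Soft Medoid stays bounded as p → ∞; in fact lim_{p→∞} t_SM(X̃(p)) = 0. -/
open Filter Topology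

/-!
A clean point has total distance `m p` to the others and a perturbed one `(n - m) p`, so the
Soft Medoid is `m e^{-(n-m)p/T} / (m e^{-(n-m)p/T} + (n - m) e^{-mp/T}) · p e₁`. As `n - m > m`,
this coefficient behaves like `p e^{-(n-2m)p/T}`, which tends to `0`.
-/

theorem Fin.sum_ite_val_lt {M : Type*} [AddCommMonoid M] {n m : ℕ} (hmn : m ≤ n) (a b : M) :
    ∑ i : Fin n, (if (i : ℕ) < m then a else b) = m • a + (n - m) • b := by
  rw [Finset.sum_ite, Finset.sum_const, Finset.sum_const, Finset.filter_not,
    Finset.card_sdiff_of_subset (Finset.filter_subset _ _), Fin.card_filter_val_lt,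
    Finset.card_univ, Fintype.card_fin, min_eq_right hmn]

section TwoClusters

variable {E : Type*} [SeminormedAddCommGroup E] {n m : ℕ}

theorem sum_norm_sub_ite_val_lt (hmn : m ≤ n) (v : E) (i : Fin n) :
    ∑ j : Fin n, ‖(if (j : ℕ) < m then v else 0) - (if (i : ℕ) < m then v else 0)‖ =
      if (i : ℕ) < m then (n - m : ℕ) * ‖v‖ else m * ‖v‖ := by
  split_ifs with hi
  · simp only [apply_ite (fun x : E => ‖x - v‖), sub_self, zero_sub, norm_neg, norm_zero,
      Fin.sum_ite_val_lt hmn, nsmul_eq_mul, mul_zero, zero_add]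
  · simp only [sub_zero, apply_ite (fun x : E => ‖x‖), norm_zero,
      Fin.sum_ite_val_lt hmn, nsmul_eq_mul, mul_zero, add_zero]

variable [Module ℝ E]

theorem sum_softmax_smul_ite_val_lt (hmn : m ≤ n) (β : ℝ) (v : E) :
    ∑ i : Fin n, (Real.exp (-β * ∑ j : Fin n, ‖(if (j : ℕ) < m then v else 0) -
        (if (i : ℕ) < m then v else 0)‖) /
      ∑ q : Fin n, Real.exp (-β * ∑ j : Fin n, ‖(if (j : ℕ) < m then v else 0) -
        (if (q : ℕ) < m then v else 0)‖)) • (if (i : ℕ) < m then v else 0) =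
      (m * Real.exp (-β * ((n - m : ℕ) * ‖v‖)) /
        (m * Real.exp (-β * ((n - m : ℕ) * ‖v‖)) +
          (n - m : ℕ) * Real.exp (-β * (m * ‖v‖)))) • v := by
  simp only [sum_norm_sub_ite_val_lt hmn, apply_ite (fun t : ℝ => Real.exp (-β * t)),
    Fin.sum_ite_val_lt hmn, nsmul_eq_mul]
  simp +contextual only [smul_ite, smul_zero, ite_div, if_true]
  rw [Fin.sum_ite_val_lt hmn, nsmul_zero, add_zero, ← Nat.cast_smul_eq_nsmul ℝ, smul_smul,
    mul_div_assoc]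

end TwoClusters

theorem tendsto_mul_exp_div_add_exp_mul_atTop {β a b k l : ℝ} (hβ : 0 < β) (hkl : k < l)
    (ha : 0 ≤ a) (hb : 0 < b) :
    Tendsto (fun p : ℝ => a * Real.exp (-β * (l * p)) /
      (a * Real.exp (-β * (l * p)) + b * Real.exp (-β * (k * p))) * p) atTop (𝓝 0) := by
  set c := β * (l - k) with hc_def
  have hc : 0 < c := mul_pos hβ (sub_pos.mpr hkl)
  have hexp : Tendsto (fun p : ℝ => Real.exp (-c * p)) atTop (𝓝 0) :=
    Real.tendsto_exp_atBot.comp <| tendsto_id.const_mul_atTop_of_neg (neg_neg_of_pos hc)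
  have hmul : Tendsto (fun p : ℝ => p * Real.exp (-c * p)) atTop (𝓝 0) := by
    simpa only [Real.rpow_one] using tendsto_rpow_mul_exp_neg_mul_atTop_nhds_zero 1 c hc
  have hden : Tendsto (fun p : ℝ => a * Real.exp (-c * p) + b) atTop (𝓝 b) := by
    simpa only [mul_zero, zero_add] using (hexp.const_mul a).add_const b
  have hlim := (hmul.const_mul a).div hden hb.ne'
  rw [mul_zero, zero_div] at hlim
  refine hlim.congr fun p => ?_
  -- divide numerator and denominator by `exp (-β * (k * p))`
  have hsplit : Real.exp (-β * (l * p)) = Real.exp (-c * p) * Real.exp (-β * (k * p)) := by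
    rw [← Real.exp_add, hc_def]; ring_nf
  rw [Pi.div_apply, hsplit]
  field_simp

/-- Point-mass perturbation with `2m < n`: the Soft Medoid stays bounded as `p → ∞`;
in fact it tends to `0`. -/
theorem soft_medoid_point_mass_tendsto_zero (n m d : ℕ) (hd : 0 < d) (hmn : 2 * m < n)
    (T : ℝ) (hT : 0 < T)
    (xt : ℝ → Fin n → EuclideanSpace ℝ (Fin d))
    (hxt : ∀ (p : ℝ) (i : Fin n), xt p i =
      if (i : ℕ) < m then p • EuclideanSpace.single (⟨0, hd⟩ : Fin d) (1 : ℝ) else 0)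
    (s : ℝ → Fin n → ℝ)
    (hs : ∀ (p : ℝ) (i : Fin n), s p i =
      Real.exp (-(1 / T) * ∑ j, ‖xt p j - xt p i‖) /
        ∑ q, Real.exp (-(1 / T) * ∑ j, ‖xt p j - xt p q‖)) :
    Tendsto (fun p : ℝ => ∑ i, s p i • xt p i) atTop (𝓝 0) := by
  set e := EuclideanSpace.single (⟨0, hd⟩ : Fin d) (1 : ℝ)
  have hsum : ∀ p : ℝ, 0 ≤ p → ∑ i, s p i • xt p i =
      (m * Real.exp (-(1 / T) * ((n - m : ℕ) * p)) /
        (m * Real.exp (-(1 / T) * ((n - m : ℕ) * p)) +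
          (n - m : ℕ) * Real.exp (-(1 / T) * (m * p))) * p) • e := by
    intro p hp
    have hnorm : ‖p • e‖ = p := by
      rw [norm_smul, PiLp.norm_single, norm_one, mul_one, Real.norm_of_nonneg hp]
    simp only [hs, hxt]
    rw [sum_softmax_smul_ite_val_lt (by omega), hnorm, smul_smul]
  have hlt : (m : ℝ) < (n - m : ℕ) := by exact_mod_cast (by omega : m < n - m)
  have hcoef := tendsto_mul_exp_div_add_exp_mul_atTop (one_div_pos.mpr hT) hlt
    (Nat.cast_nonneg m) ((Nat.cast_nonneg m).trans_lt hlt)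
  simpa only [zero_smul] using (hcoef.smul_const e).congr' <|
    (eventually_ge_atTop 0).mono fun p hp => (hsum p hp).symm
end

section
/- Suppose the location estimate t satisfies ‖t(X̃_ε)‖ ≥ b + 2M with b > 2Mm, where M = max_i ‖x_i‖ over the clean data. Then Σ_{j=1}^n ‖x̃_j − t(X̃_ε)‖ > Σ_{j=1}^n ‖x̃_j‖, where X̃_ε consists of m arbitrary perturbed points and n − m clean points each of norm at most M. -/
/-!
Each of the `m` perturbed points can be closer to `t` than to the origin by at most `‖t‖`,
while each clean point `x` satisfies `‖x - t‖ ≥ ‖t‖ - ‖x‖ ≥ ‖x‖ + (‖t‖ - 2M)`. Since there are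
more clean than perturbed points and `‖t‖ - 2M ≥ b > 2Mm`, the gains outweigh the losses.
-/

open Finset

section

variable {ι E : Type*} [SeminormedAddCommGroup E]

theorem norm_add_sub_two_mul_le_norm_sub {x : E} {M : ℝ} (hx : ‖x‖ ≤ M) (t : E) :
    ‖x‖ + (‖t‖ - 2 * M) ≤ ‖x - t‖ := by
  have := norm_sub_norm_le t x
  rw [norm_sub_rev] at this
  linarith

theorem sum_norm_add_le_sum_norm_sub (s : Finset ι) (p : ι → Prop) [DecidablePred p]
    (x : ι → E) (t : E) {M : ℝ} (hx : ∀ i ∈ s, ¬p i → ‖x i‖ ≤ M) :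
    ∑ i ∈ s, ‖x i‖ + (-(#(s.filter p) : ℝ) * ‖t‖ + (#(s.filter (¬p ·)) : ℝ) * (‖t‖ - 2 * M))
      ≤ ∑ i ∈ s, ‖x i - t‖ :=
  calc ∑ i ∈ s, ‖x i‖ + (-(#(s.filter p) : ℝ) * ‖t‖ + (#(s.filter (¬p ·)) : ℝ) * (‖t‖ - 2 * M))
      = ∑ i ∈ s.filter p, (‖x i‖ - ‖t‖) + ∑ i ∈ s.filter (¬p ·), (‖x i‖ + (‖t‖ - 2 * M)) := by
        simp only [sum_sub_distrib, sum_add_distrib, sum_const, nsmul_eq_mul]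
        rw [← sum_filter_add_sum_filter_not s p]
        ring
    _ ≤ ∑ i ∈ s.filter p, ‖x i - t‖ + ∑ i ∈ s.filter (¬p ·), ‖x i - t‖ := by
        gcongr with i hi i hi
        · exact norm_sub_norm_le _ _
        · rw [mem_filter] at hi
          exact norm_add_sub_two_mul_le_norm_sub (hx i hi.1 hi.2) t
    _ = ∑ i ∈ s, ‖x i - t‖ := sum_filter_add_sum_filter_not s p _

end

theorem neg_mul_add_sub_mul_sub_pos {m n M b T : ℝ} (hm : 0 ≤ m) (hM : 0 ≤ M)
    (hb : 2 * M * m < b) (hnm : 2 * m + 1 ≤ n) (hT : b + 2 * M ≤ T) :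
    0 < -m * T + (n - m) * (T - 2 * M) := by
  have hT2M : 0 ≤ T - 2 * M := by
    have : 0 ≤ 2 * M * m := by positivity
    linarith
  calc 0 < b - 2 * M * m := by linarith
    _ ≤ (T - 2 * M) - 2 * M * m := by linarith
    _ ≤ (n - 2 * m) * (T - 2 * M) - 2 * M * m := by
        gcongr
        exact le_mul_of_one_le_left hT2M (by linarith)
    _ = -m * T + (n - m) * (T - 2 * M) := by ring

/-- If the location estimate `t` is far away (`‖t‖ ≥ b + 2M` with `b > 2Mm`) from the data,
where the `n - m` clean points have norm at most `M` and `2m < n`, then the total distance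
from the data to `t` strictly exceeds the total distance to the origin. -/
theorem far_estimate_total_distance_gt (n m d : ℕ) (M b : ℝ) (hM : 0 ≤ M)
    (hb : 2 * M * m < b) (hnm : 2 * m < n)
    (xt : Fin n → EuclideanSpace ℝ (Fin d))
    (hclean : ∀ o : Fin n, m ≤ (o : ℕ) → ‖xt o‖ ≤ M)
    (t : EuclideanSpace ℝ (Fin d)) (ht : b + 2 * M ≤ ‖t‖) :
    (∑ j, ‖xt j‖) < ∑ j, ‖xt j - t‖ := by
  have hbad : #(univ.filter fun j : Fin n ↦ (j : ℕ) < m) = m := by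
    rw [Fin.card_filter_val_lt]; omega
  have hgood : #(univ.filter fun j : Fin n ↦ ¬(j : ℕ) < m) = n - m := by
    have := card_filter_add_card_filter_not (s := univ) fun j : Fin n ↦ (j : ℕ) < m
    rw [card_univ, Fintype.card_fin] at this
    omega
  have hsum := sum_norm_add_le_sum_norm_sub univ (fun j : Fin n ↦ (j : ℕ) < m) xt t
    (fun o _ ho ↦ hclean o (not_lt.mp ho))
  rw [hbad, hgood, Nat.cast_sub (by omega)] at hsum
  have hmargin := neg_mul_add_sub_mul_sub_pos (n := n) (Nat.cast_nonneg m) hM hb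
    (by exact_mod_cast (hnm : 2 * m + 1 ≤ n)) ht
  linarith
end

section
/- For the unweighted Medoid: if 2m < n, the clean points x_{m+1}, …, x_n have norm ≤ M, and the m perturbed points x̃_1, …, x̃_m are placed anywhere, then whenever p = min_{i≤m} ‖x̃_i‖ > (4n+1)M, the Medoid t_Med(X̃) = argmin over data points y of Σ_j ‖x̃_j − y‖ is one of the clean points, hence ‖t_Med(X̃)‖ ≤ M. -/
open scoped BigOperators

lemma sum_ite_lt_const (n m : ℕ) (hmn : m ≤ n) (a b : ℝ) :
    (∑ k : Fin n, (if (k : ℕ) < m then a else b)) = m * a + ((n - m : ℕ) : ℝ) * b := by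
  rw [Fin.sum_univ_eq_sum_range (fun k => if k < m then a else b)]
  rw [Finset.range_eq_Ico, ← Finset.sum_Ico_consecutive _ (Nat.zero_le m) hmn]
  rw [Finset.sum_congr rfl (fun k hk => if_pos (Finset.mem_Ico.mp hk).2)]
  rw [Finset.sum_congr rfl (fun k hk => if_neg (not_lt.mpr (Finset.mem_Ico.mp hk).1))]
  simp [Nat.card_Ico, mul_comm]

/-- For the (hard) Medoid with `2m < n`: if the clean points have norm at most `M` and
every perturbed point has norm greater than `(4n+1)M`, then every minimizer of the total
distance over the data points is a clean point, hence has norm at most `M`. -/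
theorem medoid_minimizer_is_clean (n m d : ℕ) (hnm : 2 * m < n) (M : ℝ)
    (xt : Fin n → EuclideanSpace ℝ (Fin d))
    (hclean : ∀ o : Fin n, m ≤ (o : ℕ) → ‖xt o‖ ≤ M)
    (hpert : ∀ i : Fin n, (i : ℕ) < m → (4 * (n : ℝ) + 1) * M < ‖xt i‖) :
    ∀ i : Fin n, (∀ j : Fin n, (∑ k, ‖xt k - xt i‖) ≤ ∑ k, ‖xt k - xt j‖) →
      ‖xt i‖ ≤ M := by
  intro i hmin
  by_cases hi : m ≤ (i : ℕ)
  · exact hclean i hi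
  push_neg at hi
  exfalso
  have hmn : m < n := by omega
  set j : Fin n := ⟨m, hmn⟩ with hj
  have hjM : ‖xt j‖ ≤ M := hclean j le_rfl
  have hM : 0 ≤ M := le_trans (norm_nonneg _) hjM
  set t := ‖xt i‖ with ht
  have htM : (4 * (n : ℝ) + 1) * M < t := hpert i hi
  have hub : (∑ k, ‖xt k - xt j‖)
      ≤ ∑ k : Fin n, (if (k : ℕ) < m then ‖xt k‖ + M else 2 * M) := by
    apply Finset.sum_le_sum
    intro k _
    by_cases hk : (k : ℕ) < m
    · simp only [hk, if_true]
      have := norm_sub_le (xt k) (xt j)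
      linarith
    · simp only [hk, if_false]
      have h1 := norm_sub_le (xt k) (xt j)
      have h2 := hclean k (le_of_not_gt hk)
      linarith
  have hlb : (∑ k : Fin n, (if (k : ℕ) < m then ‖xt k‖ - t else t - M))
      ≤ ∑ k, ‖xt k - xt i‖ := by
    apply Finset.sum_le_sum
    intro k _
    by_cases hk : (k : ℕ) < m
    · simp only [hk, if_true]
      have := norm_sub_norm_le (xt k) (xt i)
      linarith
    · simp only [hk, if_false]
      have h1 := norm_sub_norm_le (xt i) (xt k)
      have h2 := hclean k (le_of_not_gt hk)
      have h3 : ‖xt i - xt k‖ = ‖xt k - xt i‖ := norm_sub_rev _ _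
      linarith
  have key : (∑ k : Fin n, (if (k : ℕ) < m then ‖xt k‖ - t else t - M))
      ≤ ∑ k : Fin n, (if (k : ℕ) < m then ‖xt k‖ + M else 2 * M) :=
    le_trans hlb (le_trans (hmin j) hub)
  have hdiff : (∑ k : Fin n, (if (k : ℕ) < m then ‖xt k‖ + M else 2 * M))
      - (∑ k : Fin n, (if (k : ℕ) < m then ‖xt k‖ - t else t - M))
      = m * (M + t) + ((n - m : ℕ) : ℝ) * (3 * M - t) := by
    rw [← Finset.sum_sub_distrib]
    have h : ∀ k : Fin n,
        ((if (k : ℕ) < m then ‖xt k‖ + M else 2 * M)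
          - (if (k : ℕ) < m then ‖xt k‖ - t else t - M))
        = (if (k : ℕ) < m then M + t else 3 * M - t) := by
      intro k; by_cases hk : (k : ℕ) < m <;> simp [hk] <;> ring
    rw [Finset.sum_congr rfl (fun k _ => h k)]
    exact sum_ite_lt_const n m hmn.le _ _
  have hcast : ((n - m : ℕ) : ℝ) = (n : ℝ) - (m : ℝ) := by
    rw [Nat.cast_sub hmn.le]
  have hn : (2 * (m : ℝ)) + 1 ≤ (n : ℝ) := by exact_mod_cast hnm
  have hpos : 0 ≤ (∑ k : Fin n, (if (k : ℕ) < m then ‖xt k‖ + M else 2 * M))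
      - (∑ k : Fin n, (if (k : ℕ) < m then ‖xt k‖ - t else t - M)) := by linarith
  rw [hdiff, hcast] at hpos
  have ht0 : 0 ≤ t := norm_nonneg _
  nlinarith [mul_nonneg hM (by linarith : (0:ℝ) ≤ (n:ℝ) + 2 * m + 1),
    mul_nonneg (by linarith : (0:ℝ) ≤ (n:ℝ) - 2 * m - 1) ht0]
end
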